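/- arXiv:1710.10921 — 3 statements merged into one kernel-verified Lean document; each statement's English description precedes it below -/
import Mathlib

section
/- For any x > 0, with probability at least 1 − √(2/π) e^{−x} the following holds simultaneously for all models M ∈ 𝓜: ‖Ψ_Mᵀ η‖² ≤ 2 σ² ‖Ψ_M‖_F² (ln p + x), where η = σ ε. Equivalently, P( sup_{M ∈ 𝓜} { ‖Ψ_Mᵀ η‖² − 2 σ² ‖Ψ_M‖_F² (ln p + x) } ≤ 0 ) ≥ 1 − √(2/π) e^{−x}. -/
open MeasureTheory ProbabilityTheory Matrix Finset

noncomputable section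

/-- Squared Euclidean norm of a vector in `ℝ^k`. -/
def sqnorm {k : ℕ} (v : Fin k → ℝ) : ℝ := ∑ i, v i ^ 2

/-- Euclidean inner product on `ℝ^k`. -/
def ip {k : ℕ} (u v : Fin k → ℝ) : ℝ := ∑ i, u i * v i

/-- The `j`-th column of a matrix. -/
def colv {a b : ℕ} (B : Matrix (Fin a) (Fin b) ℝ) (j : Fin b) : Fin a → ℝ := fun i => B i j

/-- The matrix `B_M`: the columns of `B` outside `M` are replaced by zero. -/
def restr {a b : ℕ} (B : Matrix (Fin a) (Fin b) ℝ) (M : Finset (Fin b)) :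
    Matrix (Fin a) (Fin b) ℝ := fun i j => if j ∈ M then B i j else 0

/-- Squared Frobenius norm of a matrix. -/
def frob2 {a b : ℕ} (B : Matrix (Fin a) (Fin b) ℝ) : ℝ := ∑ j, sqnorm (colv B j)

/-- `x` has at most `r` nonzero coordinates. -/
def sparse {k : ℕ} (r : ℕ) (x : Fin k → ℝ) : Prop := (Function.support x).ncard ≤ r

/-- `H` is the orthogonal projection matrix of `ℝ^m` onto `span{φ_j : j ∈ M}`:
symmetric, idempotent, with range equal to the span of the columns of `Φ` indexed by `M`. -/
def IsProjOnto {m p : ℕ} (Φ : Matrix (Fin m) (Fin p) ℝ) (M : Finset (Fin p))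
    (H : Matrix (Fin m) (Fin m) ℝ) : Prop :=
  H.IsSymm ∧ H * H = H ∧
    LinearMap.range H.mulVecLin = Submodule.span ℝ (colv Φ '' (M : Set (Fin p)))

/-- `Ψ = A (AᵀA)⁻¹ Φ`. -/
def Psi {n m p : ℕ} (A : Matrix (Fin n) (Fin m) ℝ) (Φ : Matrix (Fin m) (Fin p) ℝ) :
    Matrix (Fin n) (Fin p) ℝ := A * (Aᵀ * A)⁻¹ * Φ

/-- `z = (AᵀA)⁻¹ Aᵀ y` where `y = A f + σ e`. -/
def zv {n m : ℕ} (A : Matrix (Fin n) (Fin m) ℝ) (f : Fin m → ℝ) (σ : ℝ) (e : Fin n → ℝ) :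
    Fin m → ℝ := ((Aᵀ * A)⁻¹ * Aᵀ).mulVec (A.mulVec f + σ • e)

/-- `ξ = (AᵀA)⁻¹ Aᵀ e`. -/
def xiv {n m : ℕ} (A : Matrix (Fin n) (Fin m) ℝ) (e : Fin n → ℝ) : Fin m → ℝ :=
  ((Aᵀ * A)⁻¹ * Aᵀ).mulVec e

/-- The collection `𝓜` of models of size at most `r/2`. -/
def models (p r : ℕ) : Finset (Finset (Fin p)) := Finset.univ.filter fun M => 2 * M.card ≤ r

open scoped Classical in
/-- The restricted collection `𝓜_γ = {M ∈ 𝓜 : ‖Ψ_M‖_F² ≤ γ²n}`. -/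
def modelsG {n m p : ℕ} (r : ℕ) (A : Matrix (Fin n) (Fin m) ℝ) (Φ : Matrix (Fin m) (Fin p) ℝ)
    (γ : ℝ) : Finset (Finset (Fin p)) :=
  Finset.univ.filter fun M => 2 * M.card ≤ r ∧ frob2 (restr (Psi A Φ) M) ≤ γ ^ 2 * (n : ℝ)

/-- The aggregated estimator `f̂_θ = ∑_{M ∈ C} θ_M f̂_M`, where `f̂_M = H_M z`. -/
def aggEst {m p : ℕ} (C : Finset (Finset (Fin p)))
    (H : Finset (Fin p) → Matrix (Fin m) (Fin m) ℝ) (zvec : Fin m → ℝ)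
    (θ : Finset (Fin p) → ℝ) : Fin m → ℝ :=
  ∑ M ∈ C, θ M • (H M).mulVec zvec

/-- The penalty `U_M = 4σ²(δ+1)ν_r⁻² ‖Ψ_M‖_F² ln p`. -/
def Ufun {n m p : ℕ} (A : Matrix (Fin n) (Fin m) ℝ) (Φ : Matrix (Fin m) (Fin p) ℝ)
    (σ δ ν2 : ℝ) (M : Finset (Fin p)) : ℝ :=
  4 * σ ^ 2 * (δ + 1) / ν2 * frob2 (restr (Psi A Φ) M) * Real.log p

/-- The Q-aggregation criterion (with `α = 1/2`, multiplied by 2):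
`∑_M θ_M (‖z - f̂_M‖² + 2U_M) + ‖z - f̂_θ‖²`. -/
def aggCrit {m p : ℕ} (C : Finset (Finset (Fin p)))
    (H : Finset (Fin p) → Matrix (Fin m) (Fin m) ℝ) (zvec : Fin m → ℝ)
    (U : Finset (Fin p) → ℝ) (θ : Finset (Fin p) → ℝ) : ℝ :=
  ∑ M ∈ C, θ M * (sqnorm (zvec - (H M).mulVec zvec) + 2 * U M) +
    sqnorm (zvec - aggEst C H zvec θ)

open Real Set Filter Topology

/-! Each coordinate `ψ_jᵀ ε` of `Ψᵀ ε` is a centred Gaussian with variance `‖ψ_j‖²`. The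
Mills-ratio bound `P(|Z| > t) ≤ √(2/π) e^{-t²/2} / t`, applied with `t² = 2(ln p + x) ≥ 1`,
shows that `(ψ_jᵀ ε)² > 2‖ψ_j‖²(ln p + x)` has probability at most `√(2/π) e^{-x} / p`. By a
union bound over the `p` columns, with probability at least `1 - √(2/π) e^{-x}` no column
exceeds its bound, and summing the column bounds over `j ∈ M` gives the claim for every model
at once. -/

lemma integral_Ioi_mul_exp_neg_mul_sq {b : ℝ} (hb : 0 < b) (c : ℝ) :
    ∫ y in Ioi c, y * exp (-b * y ^ 2) = exp (-b * c ^ 2) / (2 * b) := by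
  have hderiv (y : ℝ) :
      HasDerivAt (fun y ↦ -exp (-b * y ^ 2) / (2 * b)) (y * exp (-b * y ^ 2)) y := by
    refine (((hasDerivAt_pow 2 y).const_mul (-b)).exp.neg.div_const (2 * b)).congr_deriv ?_
    field_simp
    ring
  have hlim : Tendsto (fun y ↦ -exp (-b * y ^ 2) / (2 * b)) atTop (𝓝 0) := by
    have h := (tendsto_pow_atTop two_ne_zero).const_mul_atTop_of_neg (neg_neg_of_pos hb)
    simpa using (tendsto_exp_atBot.comp h).neg.div_const (2 * b)
  rw [integral_Ioi_of_hasDerivAt_of_tendsto (hderiv c).continuousAt.continuousWithinAt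
    (fun y _ ↦ hderiv y) (integrable_mul_exp_neg_mul_sq hb).integrableOn hlim]
  ring

lemma gaussianPDFReal_zero_one (y : ℝ) :
    gaussianPDFReal 0 1 y = (√(2 * π))⁻¹ * exp (-(1 / 2) * y ^ 2) := by
  simp only [gaussianPDFReal, NNReal.coe_one, mul_one, sub_zero]
  ring_nf

lemma gaussianReal_zero_one_Ioi_le {t : ℝ} (ht : 0 < t) :
    gaussianReal 0 1 (Ioi t) ≤ ENNReal.ofReal (exp (-t ^ 2 / 2) / (t * √(2 * π))) := by
  rw [gaussianReal_apply_eq_integral 0 one_ne_zero]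
  refine ENNReal.ofReal_le_ofReal ?_
  have hb : (0 : ℝ) < 1 / 2 := by norm_num
  calc ∫ y in Ioi t, gaussianPDFReal 0 1 y
      ≤ ∫ y in Ioi t, (t * √(2 * π))⁻¹ * (y * exp (-(1 / 2) * y ^ 2)) := by
        refine setIntegral_mono_on (integrable_gaussianPDFReal 0 1).integrableOn
          ((integrable_mul_exp_neg_mul_sq hb).integrableOn.const_mul _) measurableSet_Ioi
          fun y hy ↦ ?_
        calc gaussianPDFReal 0 1 y = (√(2 * π))⁻¹ * exp (-(1 / 2) * y ^ 2) * 1 := by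
              rw [gaussianPDFReal_zero_one, mul_one]
          _ ≤ (√(2 * π))⁻¹ * exp (-(1 / 2) * y ^ 2) * (y / t) := by
              gcongr
              exact (one_le_div ht).2 (le_of_lt hy)
          _ = (t * √(2 * π))⁻¹ * (y * exp (-(1 / 2) * y ^ 2)) := by ring
    _ = exp (-t ^ 2 / 2) / (t * √(2 * π)) := by
        rw [integral_const_mul, integral_Ioi_mul_exp_neg_mul_sq hb]
        field_simp

lemma gaussianReal_zero_one_sq_gt_le {t : ℝ} (ht : 0 < t) :
    gaussianReal 0 1 {y | t ^ 2 < y ^ 2} ≤ ENNReal.ofReal (√(2 / π) * exp (-t ^ 2 / 2) / t) := by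
  have hsplit : {y : ℝ | t ^ 2 < y ^ 2} = Ioi t ∪ (fun y ↦ -y) ⁻¹' Ioi t := by
    ext y
    simp only [Set.mem_ofPred_eq, Set.mem_union, Set.mem_Ioi, Set.mem_preimage, sq_lt_sq,
      abs_of_pos ht, lt_abs]
  have hsymm : gaussianReal 0 1 ((fun y ↦ -y) ⁻¹' Ioi t) = gaussianReal 0 1 (Ioi t) := by
    rw [← Measure.map_apply measurable_neg measurableSet_Ioi, gaussianReal_map_neg, neg_zero]
  have hsqrt : √(2 / π) * √(2 * π) = 2 := by
    rw [← sqrt_mul (by positivity), show 2 / π * (2 * π) = 2 ^ 2 by field_simp,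
      sqrt_sq zero_le_two]
  calc gaussianReal 0 1 {y | t ^ 2 < y ^ 2}
      ≤ gaussianReal 0 1 (Ioi t) + gaussianReal 0 1 ((fun y ↦ -y) ⁻¹' Ioi t) :=
        hsplit ▸ measure_union_le _ _
    _ ≤ ENNReal.ofReal (exp (-t ^ 2 / 2) / (t * √(2 * π))) +
          ENNReal.ofReal (exp (-t ^ 2 / 2) / (t * √(2 * π))) := by
        rw [hsymm]
        exact add_le_add (gaussianReal_zero_one_Ioi_le ht) (gaussianReal_zero_one_Ioi_le ht)
    _ = ENNReal.ofReal (√(2 / π) * √(2 * π) * (exp (-t ^ 2 / 2) / (t * √(2 * π)))) := by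
        rw [← ENNReal.ofReal_add (by positivity) (by positivity), hsqrt, ← two_mul]
    _ = ENNReal.ofReal (√(2 / π) * exp (-t ^ 2 / 2) / t) := by
        have : 0 < √(2 * π) := by positivity
        field_simp

lemma gaussianReal_zero_sq_gt_mul_var_le (v : NNReal) {t : ℝ} (ht : 0 < t) :
    gaussianReal 0 v {y | t ^ 2 * v < y ^ 2} ≤
      ENNReal.ofReal (√(2 / π) * exp (-t ^ 2 / 2) / t) := by
  rcases eq_or_ne v 0 with rfl | hv
  · simp [gaussianReal_zero_var]
  have hscale : gaussianReal 0 v = (gaussianReal 0 1).map (√(v : ℝ) * ·) := by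
    rw [gaussianReal_map_const_mul, mul_zero, mul_one]
    congr
    ext
    simp
  have hpre : (√(v : ℝ) * ·) ⁻¹' {y | t ^ 2 * v < y ^ 2} = {y | t ^ 2 < y ^ 2} := by
    ext y
    have hv' : (0 : ℝ) < v := by positivity
    simp only [Set.mem_preimage, Set.mem_ofPred_eq, mul_pow, sq_sqrt hv'.le,
      mul_comm (v : ℝ) (y ^ 2)]
    exact mul_lt_mul_iff_left₀ hv'
  rw [hscale, Measure.map_apply (by fun_prop) (measurableSet_lt (by fun_prop) (by fun_prop)), hpre]
  exact gaussianReal_zero_one_sq_gt_le ht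

lemma map_pi_gaussianReal_dotProduct {ι : Type*} [Fintype ι] (a : ι → ℝ) :
    (Measure.pi fun _ : ι ↦ gaussianReal 0 1).map (a ⬝ᵥ ·) =
      gaussianReal 0 (∑ i, a i ^ 2).toNNReal := by
  have h : (a ⬝ᵥ ·) = innerSL ℝ (WithLp.toLp 2 a) ∘ WithLp.toLp 2 := by
    ext u
    simp [EuclideanSpace.inner_eq_star_dotProduct, dotProduct_comm]
  rw [h, ← Measure.map_map (by fun_prop) (by fun_prop), map_pi_eq_stdGaussian,
    IsGaussian.map_eq_gaussianReal, integral_strongDual_stdGaussian, variance_dual_stdGaussian,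
    innerSL_apply_norm, EuclideanSpace.real_norm_sq_eq]

lemma measure_sq_dotProduct_gt_le {Ω ι : Type*} [MeasurableSpace Ω] [Fintype ι] {μ : Measure Ω}
    {ε : Ω → ι → ℝ} (hεmeas : AEMeasurable ε μ)
    (hεdist : μ.map ε = Measure.pi fun _ : ι ↦ gaussianReal 0 1) (a : ι → ℝ) {t : ℝ}
    (ht : 0 < t) :
    μ {ω | t ^ 2 * ∑ i, a i ^ 2 < (a ⬝ᵥ ε ω) ^ 2} ≤
      ENNReal.ofReal (√(2 / π) * exp (-t ^ 2 / 2) / t) := by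
  set v := (∑ i, a i ^ 2).toNNReal
  have hv : (v : ℝ) = ∑ i, a i ^ 2 := Real.coe_toNNReal _ (by positivity)
  calc μ {ω | t ^ 2 * ∑ i, a i ^ 2 < (a ⬝ᵥ ε ω) ^ 2}
      = μ (ε ⁻¹' ((a ⬝ᵥ ·) ⁻¹' {y | t ^ 2 * v < y ^ 2})) := by rw [hv]; rfl
    _ ≤ (Measure.pi fun _ : ι ↦ gaussianReal 0 1).map (a ⬝ᵥ ·) {y | t ^ 2 * v < y ^ 2} := by
        refine (Measure.le_map_apply hεmeas _).trans ?_
        rw [hεdist]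
        exact Measure.le_map_apply (by fun_prop) _
    _ ≤ _ := by
        rw [map_pi_gaussianReal_dotProduct]
        exact gaussianReal_zero_sq_gt_mul_var_le v ht

lemma one_sub_le_measure_forall {Ω ι : Type*} [MeasurableSpace Ω] [Fintype ι] {μ : Measure Ω}
    [IsProbabilityMeasure μ] (P : ι → Ω → Prop) {δ : ENNReal}
    (h : ∑ i, μ {ω | ¬ P i ω} ≤ δ) : 1 - δ ≤ μ {ω | ∀ i, P i ω} := by
  have hcompl : {ω | ∀ i, P i ω}ᶜ = ⋃ i, {ω | ¬ P i ω} := by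
    ext ω
    simp
  calc 1 - δ ≤ 1 - μ {ω | ∀ i, P i ω}ᶜ :=
        tsub_le_tsub_left ((hcompl ▸ measure_iUnion_fintype_le μ _).trans h) 1
    _ ≤ μ {ω | ∀ i, P i ω} := by
        rw [tsub_le_iff_right, ← measure_univ (μ := μ)]
        exact measure_univ_le_add_compl _

section Restr

variable {a b : ℕ} (B : Matrix (Fin a) (Fin b) ℝ) (M : Finset (Fin b)) (e : Fin a → ℝ)

lemma restr_transpose_mulVec_apply (j : Fin b) :
    ((restr B M)ᵀ *ᵥ e) j = if j ∈ M then colv B j ⬝ᵥ e else 0 := by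
  split_ifs with hj <;> simp [restr, colv, mulVec, dotProduct, hj]

lemma sqnorm_restr_transpose_mulVec :
    sqnorm ((restr B M)ᵀ *ᵥ e) = ∑ j ∈ M, (colv B j ⬝ᵥ e) ^ 2 := by
  simp [sqnorm, restr_transpose_mulVec_apply, ite_pow]

lemma frob2_restr : frob2 (restr B M) = ∑ j ∈ M, sqnorm (colv B j) := by
  rw [← Fintype.sum_ite_mem]
  refine sum_congr rfl fun j _ ↦ ?_
  split_ifs with hj <;> simp [sqnorm, colv, restr, hj]

lemma sqnorm_restr_transpose_mulVec_le {K : ℝ}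
    (h : ∀ j, (colv B j ⬝ᵥ e) ^ 2 ≤ K * sqnorm (colv B j)) :
    sqnorm ((restr B M)ᵀ *ᵥ e) ≤ K * frob2 (restr B M) := by
  rw [sqnorm_restr_transpose_mulVec, frob2_restr, mul_sum]
  exact sum_le_sum fun j _ ↦ h j

end Restr

theorem lemma1_gaussian_uniform_bound_general
    {n p : ℕ} (hp : 2 ≤ p) (σ : ℝ)
    (Ψ : Matrix (Fin n) (Fin p) ℝ) (Mcal : Set (Finset (Fin p)))
    {Ω : Type*} [MeasurableSpace Ω] (μ : Measure Ω) [IsProbabilityMeasure μ]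
    (ε : Ω → Fin n → ℝ) (hεmeas : Measurable ε)
    (hεdist : Measure.map ε μ = Measure.pi fun _ : Fin n => gaussianReal 0 1)
    (x : ℝ) (hx : 0 < x) :
    ENNReal.ofReal (1 - Real.sqrt (2 / Real.pi) * Real.exp (-x)) ≤
      μ {ω | ∀ M ∈ Mcal,
        sqnorm ((restr Ψ M)ᵀ.mulVec (σ • ε ω)) ≤
          2 * σ ^ 2 * frob2 (restr Ψ M) * (Real.log p + x)} := by
  set L := Real.log p + x
  have hL : 1 / 2 ≤ L := by
    have := Real.log_le_log (by norm_num) (show (2 : ℝ) ≤ p by exact_mod_cast hp)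
    linarith [Real.log_two_gt_d9]
  set t := √(2 * L)
  have ht : 1 ≤ t := Real.one_le_sqrt.2 (by linarith)
  have ht2 : t ^ 2 = 2 * L := Real.sq_sqrt (by linarith)
  have hexp : exp (-t ^ 2 / 2) = exp (-x) / p := by
    rw [ht2, show -(2 * L) / 2 = -(Real.log p + x) by ring, neg_add, exp_add, exp_neg,
      exp_log (by positivity)]
    ring
  have hbad (j : Fin p) :
      μ {ω | ¬ (colv Ψ j ⬝ᵥ ε ω) ^ 2 ≤ t ^ 2 * sqnorm (colv Ψ j)} ≤
        ENNReal.ofReal (√(2 / π) * exp (-x) / p) := by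
    simp only [not_le]
    refine (measure_sq_dotProduct_gt_le hεmeas.aemeasurable hεdist (colv Ψ j)
      (by linarith)).trans (ENNReal.ofReal_le_ofReal ?_)
    rw [hexp, ← mul_div_assoc]
    exact div_le_self (by positivity) ht
  have hunion : ∑ j, μ {ω | ¬ (colv Ψ j ⬝ᵥ ε ω) ^ 2 ≤ t ^ 2 * sqnorm (colv Ψ j)} ≤
      ENNReal.ofReal (√(2 / π) * exp (-x)) := by
    refine (sum_le_sum fun j _ ↦ hbad j).trans_eq ?_
    rw [sum_const, card_univ, Fintype.card_fin, nsmul_eq_mul, ← ENNReal.ofReal_natCast,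
      ← ENNReal.ofReal_mul (by positivity), mul_div_cancel₀ _ (by positivity)]
  calc ENNReal.ofReal (1 - √(2 / π) * exp (-x))
      = 1 - ENNReal.ofReal (√(2 / π) * exp (-x)) := by
        rw [ENNReal.ofReal_sub _ (by positivity), ENNReal.ofReal_one]
    _ ≤ μ {ω | ∀ j, (colv Ψ j ⬝ᵥ ε ω) ^ 2 ≤ t ^ 2 * sqnorm (colv Ψ j)} :=
        one_sub_le_measure_forall _ hunion
    _ ≤ _ := by
        refine measure_mono fun ω hω M _ ↦ ?_
        refine (sqnorm_restr_transpose_mulVec_le Ψ M (σ • ε ω) (K := σ ^ 2 * t ^ 2)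
          fun j ↦ ?_).trans_eq (by rw [ht2]; ring)
        rw [dotProduct_smul, smul_eq_mul, mul_pow, mul_assoc]
        exact mul_le_mul_of_nonneg_left (hω j) (sq_nonneg σ)

/-- Lemma 1: for any `x > 0`, with probability at least `1 - √(2/π) e^{-x}`,
simultaneously for all models `M ∈ 𝓜`, `‖Ψ_Mᵀ η‖² ≤ 2σ²‖Ψ_M‖_F²(ln p + x)`,
where `η = σε`. -/
theorem lemma1_gaussian_uniform_bound
    {n p : ℕ} (hp : 2 ≤ p) (σ : ℝ) (hσ : 0 < σ)
    (Ψ : Matrix (Fin n) (Fin p) ℝ) (Mcal : Set (Finset (Fin p)))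
    {Ω : Type*} [MeasurableSpace Ω] (μ : Measure Ω) [IsProbabilityMeasure μ]
    (ε : Ω → Fin n → ℝ) (hεmeas : Measurable ε)
    (hεdist : Measure.map ε μ = Measure.pi fun _ : Fin n => gaussianReal 0 1)
    (x : ℝ) (hx : 0 < x) :
    ENNReal.ofReal (1 - Real.sqrt (2 / Real.pi) * Real.exp (-x)) ≤
      μ {ω | ∀ M ∈ Mcal,
        sqnorm ((restr Ψ M)ᵀ.mulVec (σ • ε ω)) ≤
          2 * σ ^ 2 * frob2 (restr Ψ M) * (Real.log p + x)} :=
  lemma1_gaussian_uniform_bound_general hp σ Ψ Mcal μ ε hεmeas hεdist x hx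
end
end

section
/- Let M₁, M₂ ⊆ {1,…,p} with |M₁ ∪ M₂| ≤ r, and let θ₁, θ₂ ∈ ℝ^p be vectors supported on M₁ and M₂ respectively (i.e., (θ_i)_j = 0 for j ∉ M_i). Then for every e ∈ ℝ^n, ⟨(AᵀA)^{-1}Aᵀ e, Φ(θ₁ − θ₂)⟩ ≤ ν_r^{-1} ‖Ψ_{M₁∪M₂}ᵀ e‖ · ‖Φ(θ₁ − θ₂)‖. -/
open MeasureTheory ProbabilityTheory Matrix Finset

noncomputable section

/-- The Cauchy–Schwarz/sparse-eigenvalue bound (eq. (17)):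
`⟨(AᵀA)⁻¹Aᵀe, Φ(θ₁−θ₂)⟩ ≤ ν_r⁻¹ ‖Ψ_{M₁∪M₂}ᵀ e‖ ‖Φ(θ₁−θ₂)‖`,
where `ν2 = ν_r²`. -/
theorem sparse_cauchy_schwarz_bound
    {n m p r : ℕ} (hmn : m ≤ n)
    (A : Matrix (Fin n) (Fin m) ℝ) (hrank : A.rank = m)
    (Φ : Matrix (Fin m) (Fin p) ℝ) (hΦnorm : ∀ j, sqnorm (colv Φ j) = 1)
    (ν2 : ℝ) (hν2 : 0 < ν2)
    (hν2min : ∀ x : Fin p → ℝ, x ≠ 0 → sparse r x → ν2 * sqnorm x ≤ sqnorm (Φ.mulVec x))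
    (M₁ M₂ : Finset (Fin p)) (hcard : (M₁ ∪ M₂).card ≤ r)
    (θ₁ θ₂ : Fin p → ℝ)
    (hθ₁ : ∀ j ∉ M₁, θ₁ j = 0) (hθ₂ : ∀ j ∉ M₂, θ₂ j = 0)
    (e : Fin n → ℝ) :
    ip (((Aᵀ * A)⁻¹ * Aᵀ).mulVec e) (Φ.mulVec (θ₁ - θ₂)) ≤
      (Real.sqrt ν2)⁻¹ * Real.sqrt (sqnorm ((restr (Psi A Φ) (M₁ ∪ M₂))ᵀ.mulVec e)) *
        Real.sqrt (sqnorm (Φ.mulVec (θ₁ - θ₂))) := by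
  classical
  set v : Fin p → ℝ := θ₁ - θ₂ with hv
  set M : Finset (Fin p) := M₁ ∪ M₂ with hM
  have hvM : ∀ j ∉ M, v j = 0 := by
    intro j hj
    simp only [hM, Finset.mem_union, not_or] at hj
    simp [hv, hθ₁ j hj.1, hθ₂ j hj.2]
  set ξ : Fin m → ℝ := ((Aᵀ * A)⁻¹ * Aᵀ).mulVec e with hξ
  set w : Fin p → ℝ := (restr (Psi A Φ) M)ᵀ.mulVec e with hw
  -- step 1: the inner product equals ∑ j, w j * v j
  have key : ip ξ (Φ.mulVec v) = ∑ j, w j * v j := by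
    have hΨ : (Psi A Φ)ᵀ.mulVec e = Φᵀ.mulVec ξ := by
      have : (Psi A Φ)ᵀ = Φᵀ * ((Aᵀ * A)⁻¹ * Aᵀ) := by
        simp [Psi, Matrix.transpose_mul, Matrix.transpose_nonsing_inv, Matrix.mul_assoc]
      rw [this, ← Matrix.mulVec_mulVec]
    have hform : ip ξ (Φ.mulVec v) = ∑ j, (Φᵀ.mulVec ξ) j * v j := by
      simp only [ip, Matrix.mulVec, dotProduct, Matrix.transpose_apply,
        Finset.mul_sum, Finset.sum_mul]
      rw [Finset.sum_comm]
      apply Finset.sum_congr rfl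
      intro j _
      apply Finset.sum_congr rfl
      intro i _
      ring
    rw [hform]
    apply Finset.sum_congr rfl
    intro j _
    by_cases hj : j ∈ M
    · have : w j = (Φᵀ.mulVec ξ) j := by
        rw [← hΨ]
        simp [hw, Matrix.mulVec, dotProduct, restr, hj]
      rw [this]
    · rw [hvM j hj, mul_zero, mul_zero]
  -- step 2: Cauchy-Schwarz
  have sq_nonneg' : ∀ {k : ℕ} (u : Fin k → ℝ), 0 ≤ sqnorm u := by
    intro k u
    exact Finset.sum_nonneg fun i _ => sq_nonneg _
  have cs : ∑ j, w j * v j ≤ Real.sqrt (sqnorm w) * Real.sqrt (sqnorm v) := by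
    have h1 : (∑ j, w j * v j) ^ 2 ≤ (∑ j, w j ^ 2) * (∑ j, v j ^ 2) :=
      sum_mul_sq_le_sq_mul_sq Finset.univ w v
    calc ∑ j, w j * v j ≤ |∑ j, w j * v j| := le_abs_self _
      _ = Real.sqrt ((∑ j, w j * v j) ^ 2) := (Real.sqrt_sq_eq_abs _).symm
      _ ≤ Real.sqrt ((∑ j, w j ^ 2) * (∑ j, v j ^ 2)) := Real.sqrt_le_sqrt h1
      _ = Real.sqrt (sqnorm w) * Real.sqrt (sqnorm v) := by
          rw [Real.sqrt_mul (Finset.sum_nonneg fun i _ => sq_nonneg _)]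
          rfl
  -- step 3: sparse eigenvalue bound
  have hsvle : Real.sqrt (sqnorm v) ≤ (Real.sqrt ν2)⁻¹ * Real.sqrt (sqnorm (Φ.mulVec v)) := by
    by_cases hv0 : v = 0
    · simp [hv0, sqnorm, Real.sqrt_zero]
      try positivity
    · have hsp : sparse r v := by
        have hsub : Function.support v ⊆ (M : Set (Fin p)) := by
          intro j hj
          by_contra hjM
          exact hj (hvM j (by simpa using hjM))
        calc (Function.support v).ncard ≤ (M : Set (Fin p)).ncard :=
              Set.ncard_le_ncard hsub (Finset.finite_toSet M)
          _ = M.card := by simp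
          _ ≤ r := hcard
      have h := hν2min v hv0 hsp
      have h2 : sqnorm v ≤ sqnorm (Φ.mulVec v) / ν2 := (le_div_iff₀' hν2).mpr h
      calc Real.sqrt (sqnorm v) ≤ Real.sqrt (sqnorm (Φ.mulVec v) / ν2) := Real.sqrt_le_sqrt h2
        _ = (Real.sqrt ν2)⁻¹ * Real.sqrt (sqnorm (Φ.mulVec v)) := by
            rw [div_eq_mul_inv, Real.sqrt_mul (sq_nonneg' _), Real.sqrt_inv]
            ring
  calc ip ξ (Φ.mulVec v) = ∑ j, w j * v j := key
    _ ≤ Real.sqrt (sqnorm w) * Real.sqrt (sqnorm v) := cs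
    _ ≤ Real.sqrt (sqnorm w) * ((Real.sqrt ν2)⁻¹ * Real.sqrt (sqnorm (Φ.mulVec v))) :=
        mul_le_mul_of_nonneg_left hsvle (Real.sqrt_nonneg _)
    _ = (Real.sqrt ν2)⁻¹ * Real.sqrt (sqnorm w) * Real.sqrt (sqnorm (Φ.mulVec v)) := by ring
end
end

section
/- Assume ν_r > 0 and let M ⊆ {1,…,p} with |M| ≤ r. Then, pointwise in ε, ‖f̂_M − f‖² = ‖f̂_M − f_M‖² + ‖f_M − f‖² ≤ (σ²/ν_r²) ‖Ψ_Mᵀ ε‖² + ‖f_M − f‖². -/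
open MeasureTheory ProbabilityTheory Matrix Finset

noncomputable section

section Aux

lemma sqnorm_nonneg' {k : ℕ} (v : Fin k → ℝ) : 0 ≤ sqnorm v :=
  Finset.sum_nonneg fun i _ => sq_nonneg _

lemma ip_comm' {k : ℕ} (u v : Fin k → ℝ) : ip u v = ip v u := by
  unfold ip; exact Finset.sum_congr rfl fun i _ => mul_comm _ _

lemma sqnorm_add' {k : ℕ} (a b : Fin k → ℝ) :
    sqnorm (a + b) = sqnorm a + 2 * ip a b + sqnorm b := by
  unfold sqnorm ip
  rw [Finset.mul_sum, ← Finset.sum_add_distrib, ← Finset.sum_add_distrib]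
  exact Finset.sum_congr rfl fun i _ => by simp [Pi.add_apply]; ring

lemma sqnorm_smul' {k : ℕ} (c : ℝ) (v : Fin k → ℝ) :
    sqnorm (c • v) = c ^ 2 * sqnorm v := by
  unfold sqnorm
  rw [Finset.mul_sum]
  exact Finset.sum_congr rfl fun i _ => by simp [Pi.smul_apply, smul_eq_mul]; ring

lemma ip_mulVec_left' {a b : ℕ} (B : Matrix (Fin a) (Fin b) ℝ) (u : Fin b → ℝ)
    (v : Fin a → ℝ) : ip (B.mulVec u) v = ip u (Bᵀ.mulVec v) := by
  unfold ip Matrix.mulVec dotProduct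
  simp_rw [Matrix.transpose_apply, Finset.sum_mul, Finset.mul_sum]
  rw [Finset.sum_comm]
  exact Finset.sum_congr rfl fun j _ => Finset.sum_congr rfl fun i _ => by ring

lemma mulVec_eq_sum_col' {a b : ℕ} (B : Matrix (Fin a) (Fin b) ℝ) (x : Fin b → ℝ) :
    B.mulVec x = ∑ j, x j • colv B j := by
  funext i
  simp [Matrix.mulVec, dotProduct, colv, Finset.sum_apply, mul_comm]

end Aux

/-- Pointwise in `ε`: `‖f̂_M − f‖² = ‖f̂_M − f_M‖² + ‖f_M − f‖²
≤ (σ²/ν_r²)‖Ψ_Mᵀε‖² + ‖f_M − f‖²`. -/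
theorem projection_estimator_pointwise_bound
    {n m p r : ℕ} (hmn : m ≤ n)
    (A : Matrix (Fin n) (Fin m) ℝ) (hrank : A.rank = m)
    (Φ : Matrix (Fin m) (Fin p) ℝ) (hΦnorm : ∀ j, sqnorm (colv Φ j) = 1)
    (σ : ℝ) (hσ : 0 < σ)
    (ν2 : ℝ) (hν2 : 0 < ν2)
    (hν2min : ∀ x : Fin p → ℝ, x ≠ 0 → sparse r x → ν2 * sqnorm x ≤ sqnorm (Φ.mulVec x))
    (M : Finset (Fin p)) (hMcard : M.card ≤ r)
    (H : Matrix (Fin m) (Fin m) ℝ) (hH : IsProjOnto Φ M H)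
    (f : Fin m → ℝ) (ε : Fin n → ℝ) :
    sqnorm (H.mulVec (zv A f σ ε) - f) =
        sqnorm (H.mulVec (zv A f σ ε) - H.mulVec f) + sqnorm (H.mulVec f - f) ∧
      sqnorm (H.mulVec (zv A f σ ε) - f) ≤
        σ ^ 2 / ν2 * sqnorm ((restr (Psi A Φ) M)ᵀ.mulVec ε) + sqnorm (H.mulVec f - f) := by
  classical
  obtain ⟨hsym, hidem, hrange⟩ := hH
  have hsymeq : Hᵀ = H := hsym
  -- invertibility of AᵀA
  have hAA : IsUnit (Aᵀ * A) := by
    rw [← Matrix.mulVec_surjective_iff_isUnit]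
    have hr : (Aᵀ * A).rank = m := by rw [Matrix.rank_transpose_mul_self, hrank]
    have htop : LinearMap.range (Aᵀ * A).mulVecLin = ⊤ := by
      apply Submodule.eq_top_of_finrank_eq
      rw [Module.finrank_fintype_fun_eq_card, Fintype.card_fin]
      exact hr
    have hsurj := LinearMap.range_eq_top.mp htop
    exact fun v => (hsurj v).imp fun u hu => by rw [← Matrix.mulVecLin_apply]; exact hu
  have hdet : IsUnit (Aᵀ * A).det := (Matrix.isUnit_iff_isUnit_det _).mp hAA
  have hinv : (Aᵀ * A)⁻¹ * (Aᵀ * A) = 1 := Matrix.nonsing_inv_mul _ hdet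
  set ξ : Fin m → ℝ := xiv A ε with hξdef
  have hz : zv A f σ ε = f + σ • ξ := by
    unfold zv
    rw [Matrix.mulVec_add, Matrix.mulVec_smul, Matrix.mulVec_mulVec, Matrix.mul_assoc, hinv,
      Matrix.one_mulVec]
    rfl
  set g : Fin m → ℝ := H.mulVec ξ with hgdef
  have hHz : H.mulVec (zv A f σ ε) = H.mulVec f + σ • g := by
    rw [hz, Matrix.mulVec_add, Matrix.mulVec_smul]
  have hdiff : H.mulVec (zv A f σ ε) - H.mulVec f = σ • g := by
    rw [hHz]; exact add_sub_cancel_left _ _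
  have hsplit : H.mulVec (zv A f σ ε) - f = (σ • g) + (H.mulVec f - f) := by
    rw [hHz]; funext i
    simp only [Pi.add_apply, Pi.sub_apply, Pi.smul_apply, smul_eq_mul]; ring
  have hHH : H.mulVec g = g := by
    rw [hgdef, Matrix.mulVec_mulVec, hidem]
  have horth : ip (σ • g) (H.mulVec f - f) = 0 := by
    have h2 : H.mulVec (H.mulVec f - f) = 0 := by
      rw [Matrix.mulVec_sub, Matrix.mulVec_mulVec, hidem, sub_self]
    have h1 : ip g (H.mulVec f - f) = 0 := by
      rw [hgdef, ip_mulVec_left', hsymeq, h2]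
      simp [ip]
    have hsm : ip (σ • g) (H.mulVec f - f) = σ * ip g (H.mulVec f - f) := by
      unfold ip
      rw [Finset.mul_sum]
      exact Finset.sum_congr rfl fun i _ => by simp [Pi.smul_apply, smul_eq_mul]; ring
    rw [hsm, h1, mul_zero]
  have heq : sqnorm (H.mulVec (zv A f σ ε) - f) =
      sqnorm (σ • g) + sqnorm (H.mulVec f - f) := by
    rw [hsplit, sqnorm_add', horth]; ring
  set w : Fin p → ℝ := (restr (Psi A Φ) M)ᵀ.mulVec ε with hwdef
  have htrans : (A * (Aᵀ * A)⁻¹)ᵀ = (Aᵀ * A)⁻¹ * Aᵀ := by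
    rw [Matrix.transpose_mul, Matrix.transpose_nonsing_inv, Matrix.transpose_mul,
      Matrix.transpose_transpose]
  have hw : ∀ j, w j = if j ∈ M then ip (colv Φ j) ξ else 0 := by
    intro j
    by_cases hj : j ∈ M
    · rw [if_pos hj]
      have hstep : w j = ip (colv (Psi A Φ) j) ε := by
        simp [hwdef, Matrix.mulVec, dotProduct, restr, Matrix.transpose_apply, ip,
          colv, hj]
      have hcv : colv (Psi A Φ) j = (A * (Aᵀ * A)⁻¹).mulVec (colv Φ j) := by
        funext i
        simp [Psi, Matrix.mul_apply, Matrix.mulVec, dotProduct, colv]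
      rw [hstep, hcv, ip_mulVec_left', htrans]
      rfl
    · rw [if_neg hj]
      simp [hwdef, Matrix.mulVec, dotProduct, restr, Matrix.transpose_apply, hj]
  -- coefficients x supported on M with Φ x = g
  have hmem : g ∈ Submodule.span ℝ (colv Φ '' (M : Set (Fin p))) := by
    rw [← hrange]
    exact ⟨ξ, by simp [Matrix.mulVecLin_apply, hgdef]⟩
  obtain ⟨l, hlsupp, hlval⟩ := (Finsupp.mem_span_image_iff_linearCombination ℝ).mp hmem
  have hsub : (l.support : Set (Fin p)) ⊆ (M : Set (Fin p)) := Finsupp.mem_supported ℝ l |>.mp hlsupp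
  set x : Fin p → ℝ := ⇑l with hxdef
  have hxg : Φ.mulVec x = g := by
    rw [mulVec_eq_sum_col', ← hlval, Finsupp.linearCombination_apply,
      Finsupp.sum_fintype]
    intro i; simp
  have hxM : ∀ j ∉ M, x j = 0 := by
    intro j hj
    by_contra hne
    exact hj (hsub (Finsupp.mem_support_iff.mpr hne))
  have hsp : sparse r x := by
    unfold sparse
    rw [hxdef, Finsupp.fun_support_eq, Set.ncard_coe_finset]
    exact le_trans (Finset.card_le_card (Finset.coe_subset.mp hsub)) hMcard
  have hsqip : ∀ (v : Fin m → ℝ), sqnorm v = ip v v := by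
    intro v; unfold sqnorm ip
    exact Finset.sum_congr rfl fun i _ => sq (v i) ▸ (pow_two (v i))
  have hgg : sqnorm g = ip g ξ := by
    calc sqnorm g = ip g g := hsqip g
      _ = ip (H.mulVec ξ) g := by rw [← hgdef]
      _ = ip ξ (Hᵀ.mulVec g) := ip_mulVec_left' H ξ g
      _ = ip ξ g := by rw [hsymeq, hHH]
      _ = ip g ξ := ip_comm' ξ g
  have hkey : sqnorm g = ip x w := by
    rw [hgg, ← hxg, ip_mulVec_left']
    unfold ip
    refine Finset.sum_congr rfl fun j _ => ?_
    by_cases hj : j ∈ M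
    · have hΦT : (Φᵀ.mulVec ξ) j = ip (colv Φ j) ξ := by
        simp [Matrix.mulVec, dotProduct, ip, colv, Matrix.transpose_apply]
      rw [hΦT, hw j, if_pos hj]
    · rw [show x j = 0 from hxM j hj]; ring
  have hCS : (ip x w) ^ 2 ≤ sqnorm x * sqnorm w := by
    unfold ip sqnorm
    exact Finset.sum_mul_sq_le_sq_mul_sq _ _ _
  have hgle : sqnorm g ≤ sqnorm w / ν2 := by
    by_cases hx0 : x = 0
    · have hg0 : sqnorm g = 0 := by rw [hkey, hx0]; simp [ip]
      rw [hg0]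
      exact div_nonneg (sqnorm_nonneg' w) hν2.le
    · have hν := hν2min x hx0 hsp
      rw [hxg] at hν
      have h1 : ν2 * (sqnorm g) ^ 2 ≤ sqnorm g * sqnorm w := by
        calc ν2 * (sqnorm g) ^ 2 = ν2 * (ip x w) ^ 2 := by rw [hkey]
          _ ≤ ν2 * (sqnorm x * sqnorm w) := mul_le_mul_of_nonneg_left hCS hν2.le
          _ ≤ sqnorm g * sqnorm w := by nlinarith [sqnorm_nonneg' w, hν]
      rcases eq_or_lt_of_le (sqnorm_nonneg' g) with h0 | h0
      · rw [← h0]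
        exact div_nonneg (sqnorm_nonneg' w) hν2.le
      · rw [le_div_iff₀ hν2]
        nlinarith [h1, h0]
  constructor
  · rw [heq, hdiff]
  · rw [heq]
    have hb : sqnorm (σ • g) ≤ σ ^ 2 / ν2 * sqnorm w := by
      rw [sqnorm_smul']
      calc σ ^ 2 * sqnorm g ≤ σ ^ 2 * (sqnorm w / ν2) :=
            mul_le_mul_of_nonneg_left hgle (sq_nonneg σ)
        _ = σ ^ 2 / ν2 * sqnorm w := by ring
    linarith
end
end
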